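/- arXiv:2304.12565 — 2 statements merged into one kernel-verified Lean document; each statement's English description precedes it below -/
import Mathlib

section
/- Let k ≥ 1 be an integer and G a simple graph. Then G is k-extendable if and only if for every vertex subset S of G such that the induced subgraph G[S] contains k pairwise disjoint edges, the number of odd components of G − S is at most |S| − 2k. -/
open SimpleGraph

/-- `G` is `k`-extendable: every matching of size `k` in `G` extends to a
perfect matching of `G`. -/
def kExtendable {V : Type*} (G : SimpleGraph V) (k : ℕ) : Prop :=
  ∀ M : G.Subgraph, M.IsMatching → M.edgeSet.ncard = k →
    ∃ P : G.Subgraph, P.IsPerfectMatching ∧ M.edgeSet ⊆ P.edgeSet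

/-- The number of odd components (connected components of odd order) of a graph. -/
noncomputable def oddComp {α : Type*} (H : SimpleGraph α) : ℕ :=
  Nat.card {c : H.ConnectedComponent // Odd (Nat.card c.supp)}

/-!
Fix a matching `M` with `k` edges. Since a perfect matching containing `M` matches the vertices
outside `M` among themselves, `M` extends to a perfect matching exactly when `G - V(M)` has one.
By Tutte's theorem this holds iff every `T ⊆ V \ V(M)` leaves at most `|T|` odd components in
`G - V(M) - T`. The sets `S = V(M) ∪ T` are exactly the sets containing `M`, with `|S| = |T| + 2k`
and `G - S = G - V(M) - T`, which turns Tutte's condition into the stated one.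
-/

lemma Set.ncard_union_image_val_compl {V : Type*} [Finite V] {s : Set V} (u : Set ↥sᶜ) :
    (s ∪ Subtype.val '' u).ncard = s.ncard + u.ncard := by
  rw [Set.ncard_union_eq, Set.ncard_image_of_injective _ Subtype.val_injective]
  exact Set.disjoint_left.mpr fun _ hv ⟨w, _, hw⟩ ↦ w.2 (hw ▸ hv)

namespace SimpleGraph

lemma oddComp_congr {α β : Type*} {H : SimpleGraph α} {H' : SimpleGraph β} (e : H ≃g H') :
    oddComp H = oddComp H' :=
  Nat.card_congr <| e.connectedComponentEquiv.subtypeEquiv fun c ↦ by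
    rw [Nat.card_congr (ConnectedComponent.isoEquivSupp e c)]

lemma oddComp_eq_ncard_oddComponents {α : Type*} (H : SimpleGraph α) :
    oddComp H = H.oddComponents.ncard := by
  simp only [oddComp, Nat.card_coe_set_eq]
  exact Nat.card_coe_set_eq _

variable {V : Type*} {G : SimpleGraph V}

def deleteVertsTopInduceIso (t : Set V) (u : Set t) :
    ((⊤ : (G.induce t).Subgraph).deleteVerts u).coe ≃g G.induce (t \ Subtype.val '' u) where
  toFun x := ⟨x.1.1, x.1.2, by rintro ⟨y, hy, hyx⟩; exact x.2.2 (Subtype.ext hyx ▸ hy)⟩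
  invFun x := ⟨⟨x.1, x.2.1⟩, trivial, fun h ↦ x.2.2 ⟨_, h, rfl⟩⟩
  map_rel_iff' := by simp +contextual

theorem exists_isPerfectMatching_induce_iff [Finite V] (t : Set V) :
    (∃ N : (G.induce t).Subgraph, N.IsPerfectMatching) ↔
      ∀ u : Set t, oddComp (G.induce (t \ Subtype.val '' u)) ≤ u.ncard := by
  refine tutte.trans <| forall_congr' fun u ↦ ?_
  rw [IsTutteViolator, not_lt, ← oddComp_eq_ncard_oddComponents,
    oddComp_congr (deleteVertsTopInduceIso t u)]

lemma Subgraph.IsMatching.ncard_verts [Finite V] {M : G.Subgraph} (hM : M.IsMatching) :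
    M.verts.ncard = 2 * M.edgeSet.ncard := by
  have hfiber (e : M.edgeSet) : Nat.card {x // hM.toEdge x = e} = 2 := by
    obtain ⟨⟨u, v⟩, huv⟩ := e
    change Nat.card (hM.toEdge ⁻¹' {_}) = 2
    rw [hM.toEdge_preimage_singleton huv, Nat.card_coe_set_eq, Set.ncard_pair]
    exact fun h ↦ (M.adj_sub huv).ne (congrArg Subtype.val h)
  have := Fintype.ofFinite M.edgeSet
  rw [← Nat.card_coe_set_eq, ← Nat.card_congr (Equiv.sigmaFiberEquiv hM.toEdge), Nat.card_sigma,
    Finset.sum_congr rfl fun e _ ↦ hfiber e, Finset.sum_const, Finset.card_univ, smul_eq_mul,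
    mul_comm, ← Nat.card_eq_fintype_card, Nat.card_coe_set_eq]

lemma Subgraph.IsMatching.exists_isPerfectMatching_edgeSet_subset_iff {M : G.Subgraph}
    (hM : M.IsMatching) :
    (∃ P : G.Subgraph, P.IsPerfectMatching ∧ M.edgeSet ⊆ P.edgeSet) ↔
      ∃ N : (G.induce M.vertsᶜ).Subgraph, N.IsPerfectMatching := by
  constructor
  · rintro ⟨P, hP, hMP⟩
    refine ⟨P.comap (Embedding.induce M.vertsᶜ).toHom, fun v _ ↦ ?_, fun v ↦ hP.2 v⟩
    obtain ⟨w, hvw, hw⟩ := hP.1 (hP.2 v)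
    have hwM : w ∉ M.verts := fun hwM ↦ by
      obtain ⟨x, hwx, -⟩ := hM hwM
      have hxv : x = v := hP.1.eq_of_adj_left (hMP (M.mem_edgeSet.mpr hwx)) hvw.symm
      exact v.2 (hxv ▸ hwx.snd_mem)
    exact ⟨⟨w, hwM⟩, ⟨P.adj_sub hvw, hvw⟩, fun y hy ↦ Subtype.ext (hw _ hy.2)⟩
  · rintro ⟨N, hN⟩
    have hNM : (N.map (Embedding.induce M.vertsᶜ).toHom).IsMatching :=
      hN.1.map _ Subtype.val_injective
    refine ⟨M ⊔ N.map (Embedding.induce M.vertsᶜ).toHom, ⟨hM.sup hNM ?_, fun v ↦ ?_⟩,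
      Subgraph.edgeSet_mono le_sup_left⟩
    · rw [hM.support_eq_verts, hNM.support_eq_verts]
      refine Set.disjoint_left.mpr ?_
      rintro _ hv ⟨w, -, rfl⟩
      exact w.2 hv
    · by_cases hv : v ∈ M.verts
      · exact Or.inl hv
      · exact Or.inr ⟨⟨v, hv⟩, hN.2 _, rfl⟩

end SimpleGraph

theorem k_extendable_iff_general {V : Type*} [Fintype V] (G : SimpleGraph V) (k : ℕ) :
    kExtendable G k ↔
      ∀ S : Set V,
        (∃ M : G.Subgraph, M.IsMatching ∧ M.edgeSet.ncard = k ∧ M.verts ⊆ S) →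
          (oddComp (G.induce Sᶜ) : ℤ) ≤ (S.ncard : ℤ) - 2 * k := by
  have hcompl (M : G.Subgraph) (u : Set ↥M.vertsᶜ) :
      (M.verts ∪ Subtype.val '' u)ᶜ = M.vertsᶜ \ Subtype.val '' u := by
    rw [Set.compl_union, Set.sdiff_eq]
  constructor
  · rintro hext S ⟨M, hM, hMk, hMS⟩
    obtain ⟨u, rfl⟩ : ∃ u : Set ↥M.vertsᶜ, M.verts ∪ Subtype.val '' u = S :=
      ⟨Subtype.val ⁻¹' S, by rw [Subtype.image_preimage_coe, Set.inter_comm, ← Set.sdiff_eq,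
        Set.union_sdiff_cancel hMS]⟩
    have hu := (exists_isPerfectMatching_induce_iff _).mp
      (hM.exists_isPerfectMatching_edgeSet_subset_iff.mp (hext M hM hMk)) u
    rw [hcompl, Set.ncard_union_image_val_compl, hM.ncard_verts, hMk]
    push_cast
    omega
  · intro h M hM hMk
    rw [hM.exists_isPerfectMatching_edgeSet_subset_iff, exists_isPerfectMatching_induce_iff]
    intro u
    have hu := h (M.verts ∪ Subtype.val '' u) ⟨M, hM, hMk, Set.subset_union_left⟩
    rw [hcompl, Set.ncard_union_image_val_compl, hM.ncard_verts, hMk] at hu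
    omega

theorem k_extendable_iff {V : Type*} [Fintype V] (G : SimpleGraph V) (k : ℕ)
    (hk : 1 ≤ k) :
    kExtendable G k ↔
      ∀ S : Set V,
        (∃ M : G.Subgraph, M.IsMatching ∧ M.edgeSet.ncard = k ∧ M.verts ⊆ S) →
          (oddComp (G.induce Sᶜ) : ℤ) ≤ (S.ncard : ℤ) - 2 * k :=
  k_extendable_iff_general G k
end

section
/- Let s, k, t, m, n_1, ..., n_t be positive integers with n_1 ≥ n_2 ≥ ... ≥ n_t ≥ k, let H be a graph on m vertices, and let n = n_1 + ... + n_t + s + m. Then the adjacency spectral radius of K_s ∨ (H ∪ K_{n_1} ∪ ... ∪ K_{n_t}) is at most that of K_s ∨ (H ∪ K_{n−m−s−k(t−1)} ∪ (t−1)K_k), with equality if and only if n_2 = ... = n_t = k. -/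
open SimpleGraph

open scoped Classical in
/-- The adjacency spectral radius of a finite simple graph: the largest real
eigenvalue of its adjacency matrix. -/
noncomputable def specRad {V : Type*} [Fintype V] (G : SimpleGraph V) : ℝ :=
  sSup {μ : ℝ | ∃ v : V → ℝ, v ≠ 0 ∧
    Matrix.mulVec (Matrix.of fun i j => if G.Adj i j then (1:ℝ) else 0) v = μ • v}

/-- The join of two simple graphs: their disjoint union together with all
edges between the two parts. -/
def gJoin {α β : Type*} (G : SimpleGraph α) (H : SimpleGraph β) : SimpleGraph (α ⊕ β) :=
  (G ⊕g H) ⊔ SimpleGraph.fromRel (fun x y => x.isLeft ∧ y.isRight)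

/-- The disjoint union of complete graphs `K_{n 0} ∪ … ∪ K_{n (t-1)}`. -/
def cliqueUnion {t : ℕ} (n : Fin t → ℕ) : SimpleGraph (Σ i, Fin (n i)) where
  Adj x y := x.1 = y.1 ∧ x ≠ y
  symm := ⟨fun _ _ h => ⟨h.1.symm, h.2.symm⟩⟩
  loopless := ⟨fun _ h => h.2 rfl⟩

/-!
Since `ρ • 1 - A` is positive semidefinite for the top eigenvalue `ρ` of a symmetric matrix `A`,
every maximiser of the Rayleigh quotient is a `ρ`-eigenvector; for `A ≥ 0` this makes `|v|` a
nonnegative one whenever `v` is. Let `x` be such a Perron vector of `G = K_s ∨ (H ∪ K_{n_1} ∪ ⋯ ∪ K_{n_t})`; as `K_s` dominates `G`, the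
graph is connected and `x` is positive. Pick the clique of largest `x`-weight and move into it every
vertex beyond the first `k` of each other clique: the resulting graph is isomorphic to the
extremal one. On a disjoint union of cliques with weights `S_j` the quadratic form of `x` is
`∑ S_j² - ∑ x_v²`, so the Rayleigh quotient of `x` changes by `∑ T_j² - ∑ S_j²`, where `T` are the
new weights. Moving weight from lighter parts into the heaviest one raises `∑ S_j²` by at least
the square of the moved weight, which is positive as soon as a vertex moves.
-/

open Finset Matrix

theorem Matrix.dotProduct_mulVec_le_abs {n R : Type*} [Fintype n] [CommRing R] [LinearOrder R]
    [IsStrictOrderedRing R] {A : Matrix n n R} (hA : ∀ i j, 0 ≤ A i j) (x : n → R) :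
    x ⬝ᵥ A *ᵥ x ≤ |x| ⬝ᵥ A *ᵥ |x| := by
  simp only [dotProduct, mulVec, mul_sum]
  refine sum_le_sum fun i _ => sum_le_sum fun j _ => ?_
  calc x i * (A i j * x j) = A i j * (x i * x j) := by ring
    _ ≤ A i j * (|x i| * |x j|) :=
      mul_le_mul_of_nonneg_left (abs_mul (x i) (x j) ▸ le_abs_self _) (hA i j)
    _ = |x| i * (A i j * |x| j) := by simp only [Pi.abs_apply]; ring

theorem Matrix.dotProduct_algebraMap_sub_mulVec {n : Type*} [Fintype n] [DecidableEq n]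
    (A : Matrix n n ℝ) (r : ℝ) (x : n → ℝ) :
    star x ⬝ᵥ (algebraMap ℝ (Matrix n n ℝ) r - A) *ᵥ x = r * (x ⬝ᵥ x) - x ⬝ᵥ A *ᵥ x := by
  simp [Algebra.algebraMap_eq_smul_one, sub_mulVec, smul_mulVec, dotProduct_sub]

namespace Matrix.IsHermitian

variable {n : Type*} [Fintype n] [DecidableEq n] {A : Matrix n n ℝ} (hA : A.IsHermitian)

open scoped MatrixOrder in
theorem posSemidef_algebraMap_sub {r : ℝ} (hr : ∀ i, hA.eigenvalues i ≤ r) :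
    (algebraMap ℝ (Matrix n n ℝ) r - A).PosSemidef := by
  rw [← Matrix.nonneg_iff_posSemidef, sub_nonneg, le_algebraMap_iff_spectrum_le hA.isSelfAdjoint,
    hA.spectrum_real_eq_range_eigenvalues]
  rintro _ ⟨i, rfl⟩
  exact hr i

theorem dotProduct_mulVec_le {r : ℝ} (hr : ∀ i, hA.eigenvalues i ≤ r) (x : n → ℝ) :
    x ⬝ᵥ A *ᵥ x ≤ r * (x ⬝ᵥ x) := by
  have := (hA.posSemidef_algebraMap_sub hr).dotProduct_mulVec_nonneg x
  rw [dotProduct_algebraMap_sub_mulVec] at this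
  linarith

theorem mulVec_eq_smul_of_dotProduct_mulVec_eq {r : ℝ} (hr : ∀ i, hA.eigenvalues i ≤ r)
    {x : n → ℝ} (hx : x ⬝ᵥ A *ᵥ x = r * (x ⬝ᵥ x)) : A *ᵥ x = r • x := by
  have := (hA.posSemidef_algebraMap_sub hr).dotProduct_mulVec_zero_iff x
  rw [dotProduct_algebraMap_sub_mulVec, hx, sub_self, Algebra.algebraMap_eq_smul_one,
    sub_mulVec, smul_mulVec, one_mulVec, sub_eq_zero] at this
  exact (this.1 rfl).symm

noncomputable def maxEigenvalue [Nonempty n] : ℝ := univ.sup' univ_nonempty hA.eigenvalues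

theorem eigenvalues_le_maxEigenvalue [Nonempty n] (i : n) : hA.eigenvalues i ≤ hA.maxEigenvalue :=
  le_sup' _ (mem_univ i)

theorem isGreatest_maxEigenvalue [Nonempty n] :
    IsGreatest {μ : ℝ | ∃ v : n → ℝ, v ≠ 0 ∧ A *ᵥ v = μ • v} hA.maxEigenvalue := by
  refine ⟨?_, fun μ ⟨v, hv, hAv⟩ => ?_⟩
  · obtain ⟨j, -, hj⟩ := exists_mem_eq_sup' univ_nonempty hA.eigenvalues
    refine ⟨_, fun h => hA.eigenvectorBasis.orthonormal.ne_zero j ?_,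
      hj ▸ hA.mulVec_eigenvectorBasis j⟩
    exact PiLp.ext (congrFun h)
  · have hvv : 0 < v ⬝ᵥ v := by simpa using dotProduct_star_self_pos_iff.2 hv
    have := hA.dotProduct_mulVec_le hA.eigenvalues_le_maxEigenvalue v
    rw [hAv, dotProduct_smul, smul_eq_mul] at this
    exact le_of_mul_le_mul_right this hvv

theorem exists_nonneg_mulVec_eq_maxEigenvalue_smul [Nonempty n] (h0 : ∀ i j, 0 ≤ A i j) :
    ∃ v : n → ℝ, 0 ≤ v ∧ v ≠ 0 ∧ A *ᵥ v = hA.maxEigenvalue • v := by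
  obtain ⟨v, hv, hAv⟩ := hA.isGreatest_maxEigenvalue.1
  have hle := hA.dotProduct_mulVec_le hA.eigenvalues_le_maxEigenvalue |v|
  have habs := dotProduct_mulVec_le_abs h0 v
  have hvv : |v| ⬝ᵥ |v| = v ⬝ᵥ v := by simp [dotProduct, abs_mul_abs_self]
  rw [hAv, dotProduct_smul, smul_eq_mul, ← hvv] at habs
  refine ⟨|v|, abs_nonneg v, by simpa using hv, ?_⟩
  exact hA.mulVec_eq_smul_of_dotProduct_mulVec_eq hA.eigenvalues_le_maxEigenvalue
    (le_antisymm hle habs)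

end Matrix.IsHermitian

theorem Finset.sum_sq_add_sq_sub_le {ι : Type*} [Fintype ι] {S T : ι → ℝ} {i : ι}
    (hS : ∀ j, S j ≤ S i) (hT : ∀ j ≠ i, T j ≤ S j) (hsum : ∑ j, T j = ∑ j, S j) :
    ∑ j, S j ^ 2 + (T i - S i) ^ 2 ≤ ∑ j, T j ^ 2 := by
  have hδ : ∑ j, (T j - S j) = 0 := by rw [sum_sub_distrib, hsum, sub_self]
  have hdiff : ∑ j, T j ^ 2 - ∑ j, S j ^ 2 =
      ∑ j, (2 * (S i - S j) * (S j - T j) + (T j - S j) ^ 2) := by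
    calc ∑ j, T j ^ 2 - ∑ j, S j ^ 2
        = ∑ j, (2 * (S i - S j) * (S j - T j) + (T j - S j) ^ 2 + 2 * S i * (T j - S j)) := by
          rw [← sum_sub_distrib]; exact sum_congr rfl fun j _ => by ring
      -- the terms `2 * S i * (T j - S j)` add up to zero
      _ = _ := by rw [sum_add_distrib, ← mul_sum, hδ, mul_zero, add_zero]
  have hterm (j : ι) : (T j - S j) ^ 2 ≤ 2 * (S i - S j) * (S j - T j) + (T j - S j) ^ 2 := by
    obtain rfl | hj := eq_or_ne j i
    · simp
    · nlinarith [hS j, hT j hj]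
  have hsq : (T i - S i) ^ 2 ≤ ∑ j, (T j - S j) ^ 2 :=
    single_le_sum (f := fun j => (T j - S j) ^ 2) (fun j _ => sq_nonneg _) (mem_univ i)
  linarith [sum_le_sum fun j (_ : j ∈ univ) => hterm j]

theorem Fintype.card_fiber_eq_of_forall_ne {β ι : Type*} [Fintype β] [Fintype ι] [DecidableEq ι]
    (f : β → ι) {c : ι → ℕ} {i₀ : ι} (hc : ∀ j ≠ i₀, card {p // f p = j} = c j)
    (hsum : ∑ j, c j = card β) : card {p // f p = i₀} = c i₀ := by
  have htot : ∑ j, card {p // f p = j} = card β := by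
    rw [← card_sigma]; exact card_congr (Equiv.sigmaFiberEquiv f)
  rw [← add_sum_erase _ _ (mem_univ i₀)] at htot hsum
  rw [Finset.sum_congr rfl fun j (hj : j ∈ univ.erase i₀) => hc j (ne_of_mem_erase hj)] at htot
  exact Nat.add_right_cancel (htot.trans hsum.symm)

theorem Fin.sum_ite_eq_add_mul {t : ℕ} (i₀ : Fin t) (a k : ℕ) :
    ∑ j, (if j = i₀ then a else k) = a + (t - 1) * k := by
  simp [sum_ite, filter_eq', filter_ne', card_erase_of_mem]

theorem Fin.ite_sum_sub_mul_eq {t k : ℕ} {n : Fin t → ℕ} {i₀ : Fin t} (h : ∀ j ≠ i₀, n j = k) :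
    (fun j => if j = i₀ then ∑ j, n j - k * (t - 1) else k) = n := by
  have hsum : ∑ j, n j = n i₀ + (t - 1) * k := by
    rw [← Fin.sum_ite_eq_add_mul]
    refine Finset.sum_congr rfl fun j _ => ?_
    split_ifs with hj
    · rw [hj]
    · exact h j hj
  funext j
  split_ifs with hj
  · rw [hsum, hj, mul_comm]; omega
  · exact (h j hj).symm

theorem card_sigma_fst_eq_and_val_lt {t k : ℕ} {n : Fin t → ℕ} {j : Fin t} (hk : k ≤ n j) :
    #{p : Σ j, Fin (n j) | p.1 = j ∧ (p.2 : ℕ) < k} = k := by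
  have : ({p : Σ j, Fin (n j) | p.1 = j ∧ (p.2 : ℕ) < k} : Finset _) =
      ({c : Fin (n j) | (c : ℕ) < k} : Finset _).map (Function.Embedding.sigmaMk j) := by
    ext ⟨j', c⟩
    simp only [mem_filter, mem_univ, true_and, mem_map, Function.Embedding.sigmaMk_apply]
    constructor
    · rintro ⟨rfl, h⟩; exact ⟨c, h, rfl⟩
    · rintro ⟨c', h, hc'⟩; cases hc'; exact ⟨rfl, h⟩
  rw [this, card_map, Fin.card_filter_val_lt, min_eq_right hk]

namespace SimpleGraph

section Spectral

open scoped Classical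

variable {V W : Type*} [Fintype V] [Fintype W]

theorem specRad_def (G : SimpleGraph V) :
    specRad G = sSup {μ : ℝ | ∃ x : V → ℝ, x ≠ 0 ∧ G.adjMatrix ℝ *ᵥ x = μ • x} :=
  rfl

theorem specRad_eq_maxEigenvalue [Nonempty V] (G : SimpleGraph V) :
    specRad G = (G.isHermitian_adjMatrix ℝ).maxEigenvalue :=
  (G.isHermitian_adjMatrix ℝ).isGreatest_maxEigenvalue.csSup_eq

theorem exists_nonneg_adjMatrix_mulVec_eq_specRad_smul [Nonempty V] (G : SimpleGraph V) :
    ∃ x : V → ℝ, 0 ≤ x ∧ x ≠ 0 ∧ G.adjMatrix ℝ *ᵥ x = specRad G • x := by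
  rw [specRad_eq_maxEigenvalue]
  exact (G.isHermitian_adjMatrix ℝ).exists_nonneg_mulVec_eq_maxEigenvalue_smul fun i j => by
    rw [adjMatrix_apply]; split_ifs <;> norm_num

theorem Connected.pos_of_adjMatrix_mulVec_eq_smul {G : SimpleGraph V} (hG : G.Connected)
    {x : V → ℝ} (hx0 : 0 ≤ x) (hx : x ≠ 0) {μ : ℝ} (h : G.adjMatrix ℝ *ᵥ x = μ • x) (u : V) :
    0 < x u := by
  have adj_zero {v w : V} (hvw : G.Adj v w) (hv : x v = 0) : x w = 0 := by
    have hsum := congrFun h v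
    rw [adjMatrix_mulVec_apply, Pi.smul_apply, hv, smul_zero] at hsum
    exact (sum_eq_zero_iff_of_nonneg fun w _ => hx0 w).1 hsum w (by simpa using hvw)
  have walk_zero {v w : V} (p : G.Walk v w) (hv : x v = 0) : x w = 0 := by
    induction p with
    | nil => exact hv
    | cons hvw _ ih => exact ih (adj_zero hvw hv)
  refine (hx0 u).lt_of_ne fun hu => hx (funext fun w => ?_)
  exact walk_zero (hG.preconnected u w).some hu.symm

noncomputable def quadForm (G : SimpleGraph V) (x : V → ℝ) : ℝ :=
  ∑ u, ∑ v, if G.Adj u v then x u * x v else 0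

theorem dotProduct_adjMatrix_mulVec (G : SimpleGraph V) (x : V → ℝ) :
    x ⬝ᵥ G.adjMatrix ℝ *ᵥ x = quadForm G x := by
  simp only [dotProduct, mulVec, adjMatrix_apply, quadForm, mul_sum, ite_mul, one_mul, zero_mul,
    mul_ite, mul_zero]

theorem quadForm_le_specRad_mul [Nonempty V] (G : SimpleGraph V) (x : V → ℝ) :
    quadForm G x ≤ specRad G * (x ⬝ᵥ x) := by
  rw [← dotProduct_adjMatrix_mulVec, specRad_eq_maxEigenvalue]
  exact (G.isHermitian_adjMatrix ℝ).dotProduct_mulVec_le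
    (G.isHermitian_adjMatrix ℝ).eigenvalues_le_maxEigenvalue x

theorem specRad_le_of_quadForm_le [Nonempty V] {G G' : SimpleGraph V} {x : V → ℝ} (hx : x ≠ 0)
    (hGx : G.adjMatrix ℝ *ᵥ x = specRad G • x) (h : quadForm G x ≤ quadForm G' x) :
    specRad G ≤ specRad G' := by
  rw [← dotProduct_adjMatrix_mulVec, hGx, dotProduct_smul, smul_eq_mul] at h
  exact le_of_mul_le_mul_right (h.trans (quadForm_le_specRad_mul G' x))
    (by simpa using dotProduct_star_self_pos_iff.2 hx)

theorem specRad_lt_of_quadForm_lt [Nonempty V] {G G' : SimpleGraph V} {x : V → ℝ} (hx : x ≠ 0)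
    (hGx : G.adjMatrix ℝ *ᵥ x = specRad G • x) (h : quadForm G x < quadForm G' x) :
    specRad G < specRad G' := by
  rw [← dotProduct_adjMatrix_mulVec, hGx, dotProduct_smul, smul_eq_mul] at h
  exact lt_of_mul_lt_mul_right (h.trans_le (quadForm_le_specRad_mul G' x))
    (by simpa using (dotProduct_star_self_pos_iff.2 hx).le)

theorem Iso.adjMatrix_mulVec_comp {G : SimpleGraph V} {G' : SimpleGraph W} (e : G ≃g G')
    (y : W → ℝ) : G.adjMatrix ℝ *ᵥ (y ∘ e) = (G'.adjMatrix ℝ *ᵥ y) ∘ e := by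
  funext u
  simp only [mulVec, dotProduct, adjMatrix_apply, Function.comp_apply]
  rw [← e.toEquiv.sum_comp]
  simp [e.map_adj_iff]

theorem specRad_congr {G : SimpleGraph V} {G' : SimpleGraph W} (e : G ≃g G') :
    specRad G = specRad G' := by
  rw [specRad_def, specRad_def]
  congr 1
  ext μ
  constructor
  · rintro ⟨x, hx, h⟩
    refine ⟨x ∘ e.symm, fun h0 => hx (funext fun u => by simpa using congrFun h0 (e u)), ?_⟩
    rw [e.symm.adjMatrix_mulVec_comp, h]
    rfl
  · rintro ⟨y, hy, h⟩
    refine ⟨y ∘ e, fun h0 => hy (funext fun w => by simpa using congrFun h0 (e.symm w)), ?_⟩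
    rw [e.adjMatrix_mulVec_comp, h]
    rfl

end Spectral

section Join

variable {α β α' β' : Type*} {G : SimpleGraph α} {H : SimpleGraph β}

@[simp] theorem gJoin_adj_inl_inl {a a' : α} : (gJoin G H).Adj (.inl a) (.inl a') ↔ G.Adj a a' := by
  simp [gJoin]

@[simp] theorem gJoin_adj_inl_inr (a : α) (b : β) : (gJoin G H).Adj (.inl a) (.inr b) := by
  simp [gJoin]

@[simp] theorem gJoin_adj_inr_inl (b : β) (a : α) : (gJoin G H).Adj (.inr b) (.inl a) := by
  simp [gJoin]

@[simp] theorem gJoin_adj_inr_inr {b b' : β} : (gJoin G H).Adj (.inr b) (.inr b') ↔ H.Adj b b' := by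
  simp [gJoin]

def Iso.gJoinCongr {G' : SimpleGraph α'} {H' : SimpleGraph β'} (e₁ : G ≃g G')
    (e₂ : H ≃g H') : gJoin G H ≃g gJoin G' H' where
  toEquiv := e₁.toEquiv.sumCongr e₂.toEquiv
  map_rel_iff' := by rintro (a | b) (a' | b') <;> simp [e₁.map_adj_iff, e₂.map_adj_iff]

theorem connected_gJoin_top [Nonempty α] (H : SimpleGraph β) :
    (gJoin (⊤ : SimpleGraph α) H).Connected := by
  obtain ⟨a⟩ := ‹Nonempty α›
  refine (connected_iff_exists_forall_reachable _).2 ⟨.inl a, ?_⟩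
  rintro (a' | b)
  · obtain rfl | h := eq_or_ne a a'
    · rfl
    · exact (gJoin_adj_inl_inl.2 h).reachable
  · exact (gJoin_adj_inl_inr a b).reachable

end Join

section QuadForm

open scoped Classical

variable {α β : Type*} [Fintype α] [Fintype β]

theorem quadForm_sum (G : SimpleGraph α) (H : SimpleGraph β) (x : α ⊕ β → ℝ) :
    quadForm (G ⊕g H) x = quadForm G (x ∘ .inl) + quadForm H (x ∘ .inr) := by
  simp [quadForm, Fintype.sum_sum_type]

theorem quadForm_gJoin (G : SimpleGraph α) (H : SimpleGraph β) (x : α ⊕ β → ℝ) :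
    quadForm (gJoin G H) x = quadForm G (x ∘ .inl) + quadForm H (x ∘ .inr) +
      2 * ((∑ a, x (.inl a)) * ∑ b, x (.inr b)) := by
  simp only [quadForm, Fintype.sum_sum_type, gJoin_adj_inl_inl, gJoin_adj_inl_inr,
    gJoin_adj_inr_inl, gJoin_adj_inr_inr, if_true, sum_mul_sum, Function.comp_apply,
    sum_add_distrib]
  have hswap : ∑ b, ∑ a, x (.inr b) * x (.inl a) = ∑ a, ∑ b, x (.inl a) * x (.inr b) := by
    rw [sum_comm]; simp only [mul_comm]
  linarith

end QuadForm

section FiberCliques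

variable {β ι : Type*}

def fiberCliques (f : β → ι) : SimpleGraph β where
  Adj p q := f p = f q ∧ p ≠ q
  symm := ⟨fun _ _ h => ⟨h.1.symm, h.2.symm⟩⟩
  loopless := ⟨fun _ h => h.2 rfl⟩

@[simp] theorem fiberCliques_adj {f : β → ι} {p q : β} :
    (fiberCliques f).Adj p q ↔ f p = f q ∧ p ≠ q :=
  Iff.rfl

theorem cliqueUnion_eq_fiberCliques {t : ℕ} (n : Fin t → ℕ) :
    cliqueUnion n = fiberCliques Sigma.fst :=
  rfl

theorem fiberCliques_comp {κ : Type*} {e : ι → κ} (he : e.Injective) (f : β → ι) :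
    fiberCliques (e ∘ f) = fiberCliques f := by
  ext; simp [he.eq_iff]

noncomputable def fiberCliquesIsoCliqueUnion [Fintype β] {t : ℕ} (f : β → Fin t)
    (c : Fin t → ℕ) (hc : ∀ j, Fintype.card {p // f p = j} = c j) :
    fiberCliques f ≃g cliqueUnion c where
  toEquiv := (Equiv.sigmaFiberEquiv f).symm.trans
    (Equiv.sigmaCongrRight fun j => Fintype.equivFinOfCardEq (hc j))
  map_rel_iff' := and_congr Iff.rfl (Equiv.injective _).ne_iff

variable [Fintype β]

open scoped Classical in
theorem quadForm_fiberCliques [Fintype ι] (f : β → ι) (z : β → ℝ) :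
    quadForm (fiberCliques f) z = ∑ j, (∑ p with f p = j, z p) ^ 2 - ∑ p, z p ^ 2 := by
  set F : ι → ℝ := fun j => ∑ p with f p = j, z p
  have hrow (p : β) : ∑ q, (if (fiberCliques f).Adj p q then z p * z q else 0) =
      z p * F (f p) - z p ^ 2 := by
    have hsplit (q : β) : (if (fiberCliques f).Adj p q then z p * z q else 0) =
        (if f q = f p then z p * z q else 0) - if p = q then z p * z q else 0 := by
      by_cases hpq : p = q
      · subst hpq; simp
      · simp [hpq, eq_comm]
    simp only [hsplit, sum_sub_distrib, sum_ite_eq, mem_univ, if_true, F, mul_sum, sum_filter,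
      sq, mul_ite, mul_zero]
  have hsq : ∑ j, F j ^ 2 = ∑ p, z p * F (f p) := by
    rw [← sum_fiberwise univ f (fun p => z p * F (f p))]
    refine sum_congr rfl fun j _ => ?_
    rw [sq, sum_mul]
    exact sum_congr rfl fun p hp => by rw [(mem_filter.1 hp).2]
  rw [quadForm, hsq, ← sum_sub_distrib]
  exact sum_congr rfl fun p _ => hrow p

open scoped Classical in
theorem quadForm_fiberCliques_add_sq_le [Fintype ι] {f g : β → ι} {i : ι} {z : β → ℝ}
    (hz : 0 ≤ z) (hg : ∀ p, g p = f p ∨ g p = i)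
    (hi : ∀ j, ∑ p with f p = j, z p ≤ ∑ p with f p = i, z p) :
    quadForm (fiberCliques f) z + (∑ p with g p ≠ f p, z p) ^ 2 ≤
      quadForm (fiberCliques g) z := by
  have hT (j : ι) (hj : j ≠ i) : ∑ p with g p = j, z p ≤ ∑ p with f p = j, z p := by
    refine sum_le_sum_of_subset_of_nonneg (fun p => ?_) fun p _ _ => hz p
    simp only [mem_filter, mem_univ, true_and]
    rintro rfl
    exact ((hg p).resolve_right hj).symm
  have hmoved : ∑ p with g p = i, z p = ∑ p with f p = i, z p + ∑ p with g p ≠ f p, z p := by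
    simp only [sum_filter, ← sum_add_distrib]
    refine sum_congr rfl fun p _ => ?_
    rcases hg p with h | h <;> split_ifs <;> simp_all
  have := sum_sq_add_sq_sub_le hi hT ((sum_fiberwise univ g z).trans (sum_fiberwise univ f z).symm)
  rw [quadForm_fiberCliques, quadForm_fiberCliques]
  rw [hmoved, add_sub_cancel_left] at this
  linarith

end FiberCliques

theorem nonempty_fiberCliques_iso_cliqueUnion {t k : ℕ} (n : Fin t → ℕ) (hk : ∀ j, k ≤ n j)
    (i i₀ : Fin t) :
    Nonempty (fiberCliques (fun p : Σ j, Fin (n j) => if k ≤ (p.2 : ℕ) then i else p.1) ≃g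
      cliqueUnion (fun j => if j = i₀ then ∑ j, n j - k * (t - 1) else k)) := by
  set g : (Σ j, Fin (n j)) → Fin t := fun p => if k ≤ (p.2 : ℕ) then i else p.1
  set σ := Equiv.swap i₀ i
  have hfiber (j : Fin t) (hj : j ≠ i₀) :
      Fintype.card {p // σ (g p) = j} = if j = i₀ then ∑ j, n j - k * (t - 1) else k := by
    have hσj : σ j ≠ i := fun h => hj (by simpa [σ, Equiv.swap_apply_eq_iff] using h)
    rw [if_neg hj, Fintype.card_subtype, ← card_sigma_fst_eq_and_val_lt (hk (σ j))]
    congr 1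
    ext p
    simp only [mem_filter, mem_univ, true_and, Equiv.swap_apply_eq_iff, g, σ]
    split_ifs with h
    · exact iff_of_false (Ne.symm hσj) (by omega)
    · simp only [not_le] at h; simp [h]
  have hsum : ∑ j, (if j = i₀ then ∑ j, n j - k * (t - 1) else k) =
      Fintype.card (Σ j, Fin (n j)) := by
    have : k * (t - 1) ≤ ∑ j, n j :=
      calc k * (t - 1) ≤ k * t := Nat.mul_le_mul_left k (Nat.sub_le t 1)
        _ = ∑ _j : Fin t, k := by simp [mul_comm]
        _ ≤ ∑ j, n j := sum_le_sum fun j _ => hk j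
    rw [Fin.sum_ite_eq_add_mul, Fintype.card_sigma, mul_comm (t - 1)]
    simp only [Fintype.card_fin]
    omega
  -- relabelling the parts by `σ` leaves the graph unchanged and puts the big part at `i₀`
  rw [← fiberCliques_comp σ.injective]
  refine ⟨fiberCliquesIsoCliqueUnion _ _ fun j => ?_⟩
  obtain rfl | hj := eq_or_ne j i₀
  · exact Fintype.card_fiber_eq_of_forall_ne _ hfiber hsum
  · exact hfiber j hj

open scoped Classical in
theorem exists_forall_specRad_gJoin_fiberCliques_le {α γ β ι : Type*} [Fintype α] [Nonempty α]
    [Fintype γ] [Fintype β] [Fintype ι] [Nonempty ι] (H : SimpleGraph γ) (f : β → ι) :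
    ∃ i, ∀ g : β → ι, (∀ p, g p = f p ∨ g p = i) →
      specRad (gJoin (⊤ : SimpleGraph α) (H ⊕g fiberCliques f)) ≤
        specRad (gJoin (⊤ : SimpleGraph α) (H ⊕g fiberCliques g)) ∧
      ((∃ p, g p ≠ f p) → specRad (gJoin (⊤ : SimpleGraph α) (H ⊕g fiberCliques f)) <
        specRad (gJoin (⊤ : SimpleGraph α) (H ⊕g fiberCliques g))) := by
  set G := gJoin (⊤ : SimpleGraph α) (H ⊕g fiberCliques f)
  obtain ⟨x, hx0, hx, hGx⟩ := G.exists_nonneg_adjMatrix_mulVec_eq_specRad_smul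
  have hpos := (connected_gJoin_top _).pos_of_adjMatrix_mulVec_eq_smul hx0 hx hGx
  set z : β → ℝ := fun p => x (.inr (.inr p))
  obtain ⟨i, hi⟩ := Finite.exists_max fun j => ∑ p with f p = j, z p
  refine ⟨i, fun g hg => ?_⟩
  have hQ := quadForm_fiberCliques_add_sq_le (fun p => (hpos _).le) hg hi
  have hdiff : quadForm (gJoin (⊤ : SimpleGraph α) (H ⊕g fiberCliques g)) x - quadForm G x =
      quadForm (fiberCliques g) z - quadForm (fiberCliques f) z := by
    have hz : (x ∘ Sum.inr) ∘ Sum.inr = z := rfl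
    simp only [G, quadForm_gJoin, quadForm_sum, hz]; ring
  refine ⟨specRad_le_of_quadForm_le hx hGx (by nlinarith), fun ⟨p, hp⟩ => ?_⟩
  have hmoved : 0 < ∑ q with g q ≠ f q, z q :=
    sum_pos' (fun q _ => (hpos _).le) ⟨p, by simpa using hp, hpos _⟩
  exact specRad_lt_of_quadForm_lt hx hGx (by nlinarith)

end SimpleGraph

theorem spectral_clique_union_join_general (s k t m : ℕ) (hs : 0 < s)
    (ht : 0 < t) (nf : Fin t → ℕ)
    (hmono : ∀ i j : Fin t, i ≤ j → nf j ≤ nf i) (hnk : ∀ i, k ≤ nf i)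
    (H : SimpleGraph (Fin m)) (n : ℕ) (hn : n = (∑ i, nf i) + s + m) :
    specRad (gJoin (⊤ : SimpleGraph (Fin s)) (H ⊕g cliqueUnion nf)) ≤
      specRad (gJoin (⊤ : SimpleGraph (Fin s)) (H ⊕g cliqueUnion
        (fun i : Fin t => if i = ⟨0, ht⟩ then n - m - s - k * (t - 1) else k))) ∧
    (specRad (gJoin (⊤ : SimpleGraph (Fin s)) (H ⊕g cliqueUnion nf)) =
      specRad (gJoin (⊤ : SimpleGraph (Fin s)) (H ⊕g cliqueUnion
        (fun i : Fin t => if i = ⟨0, ht⟩ then n - m - s - k * (t - 1) else k))) ↔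
      ∀ i : Fin t, i ≠ ⟨0, ht⟩ → nf i = k) := by
  have : Nonempty (Fin s) := ⟨⟨0, hs⟩⟩
  have : Nonempty (Fin t) := ⟨⟨0, ht⟩⟩
  have hN : n - m - s = ∑ j, nf j := by omega
  rw [hN]
  obtain ⟨i, hi⟩ := exists_forall_specRad_gJoin_fiberCliques_le (α := Fin s) H
    (Sigma.fst : (Σ j, Fin (nf j)) → Fin t)
  obtain ⟨e⟩ := nonempty_fiberCliques_iso_cliqueUnion nf hnk i ⟨0, ht⟩
  obtain ⟨hle, hlt⟩ := hi (fun p => if k ≤ (p.2 : ℕ) then i else p.1) fun p => by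
    split_ifs <;> simp
  rw [specRad_congr (Iso.refl.gJoinCongr (Iso.refl.sumCongr e)),
    ← cliqueUnion_eq_fiberCliques] at hle hlt
  refine ⟨hle, fun heq => ?_, fun hk => ?_⟩
  · by_contra! ⟨j, hj0, hjk⟩
    obtain ⟨j', hj'i, hj'k⟩ : ∃ j', j' ≠ i ∧ k < nf j' := by
      obtain rfl | hji := eq_or_ne j i
      · exact ⟨⟨0, ht⟩, hj0.symm, (lt_of_le_of_ne (hnk j) (Ne.symm hjk)).trans_le
          (hmono _ _ (Nat.zero_le _))⟩
      · exact ⟨j, hji, lt_of_le_of_ne (hnk j) (Ne.symm hjk)⟩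
    exact (hlt ⟨⟨j', ⟨k, hj'k⟩⟩, by simpa using hj'i.symm⟩).ne heq
  · exact congrArg (fun c => specRad (gJoin ⊤ (H ⊕g cliqueUnion c)))
      (Fin.ite_sum_sub_mul_eq hk).symm

theorem spectral_clique_union_join (s k t m : ℕ) (hs : 0 < s) (hk : 0 < k)
    (ht : 0 < t) (hm : 0 < m) (nf : Fin t → ℕ)
    (hmono : ∀ i j : Fin t, i ≤ j → nf j ≤ nf i) (hnk : ∀ i, k ≤ nf i)
    (H : SimpleGraph (Fin m)) (n : ℕ) (hn : n = (∑ i, nf i) + s + m) :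
    specRad (gJoin (⊤ : SimpleGraph (Fin s)) (H ⊕g cliqueUnion nf)) ≤
      specRad (gJoin (⊤ : SimpleGraph (Fin s)) (H ⊕g cliqueUnion
        (fun i : Fin t => if i = ⟨0, ht⟩ then n - m - s - k * (t - 1) else k))) ∧
    (specRad (gJoin (⊤ : SimpleGraph (Fin s)) (H ⊕g cliqueUnion nf)) =
      specRad (gJoin (⊤ : SimpleGraph (Fin s)) (H ⊕g cliqueUnion
        (fun i : Fin t => if i = ⟨0, ht⟩ then n - m - s - k * (t - 1) else k))) ↔
      ∀ i : Fin t, i ≠ ⟨0, ht⟩ → nf i = k) :=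
  spectral_clique_union_join_general s k t m hs ht nf hmono hnk H n hn
end
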